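/- Let K ≥ 2, ε ∈ (0,1), and let f(x) = argmax_{i∈[K]}(w⁽ⁱ⁾·x + tᵢ) be a multiclass linear classifier on ℝ^d. Let V be a nonzero subspace such that ‖proj_V(w⁽ⁱ⁾ − w⁽ʲ⁾)‖ ≤ (ε²/K⁴)‖w⁽ⁱ⁾ − w⁽ʲ⁾‖ for all i ≠ j. Then P_{x∼N(0,I)}[f(x) ≠ f^{⊥V}(x)] ≤ Cε for an absolute constant C, where f^{⊥V}(x) = argmax_{i∈[K]}(proj_{V^⊥}(w⁽ⁱ⁾)·x + tᵢ). -/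

import Mathlib

/-
If `f` and `f^{⊥V}` disagree at `x`, say `f x = i` and `f^{⊥V} x = j`, then the score gap
`(w⁽ⁱ⁾ - w⁽ʲ⁾)·x + tᵢ - tⱼ` is nonnegative while its projected version is nonpositive; their
difference is `proj_V(w⁽ⁱ⁾ - w⁽ʲ⁾)·x`, so the gap is at most `|proj_V(w⁽ⁱ⁾ - w⁽ʲ⁾)·x|`. For
`x ∼ N(0, I)` and `u = w⁽ⁱ⁾ - w⁽ʲ⁾`, `u·x ∼ N(0, ‖u‖²)`. With `δ = ε/K²` the gap falls in a slab
of half-width `δ‖u‖` with probability at most `δ` (the density of `u·x` is at most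
`1/(√(2π)‖u‖)`), and `|proj_V(u)·x| ≥ δ‖u‖` has probability at most `δ²` by Chebyshev, as
`‖proj_V u‖ ≤ δ²‖u‖`. A union bound over the `K²` pairs gives `K²(δ + δ²) ≤ 2ε`.
-/

open MeasureTheory ProbabilityTheory RealInnerProductSpace

/-- The standard Gaussian measure on `EuclideanSpace ℝ (Fin d)`. -/
noncomputable def stdGaussianE (d : ℕ) : Measure (EuclideanSpace ℝ (Fin d)) :=
  (Measure.pi fun _ : Fin d => gaussianReal 0 1).map
    (MeasurableEquiv.toLp 2 (Fin d → ℝ))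

open Real

def IsFirstArgmax {ι : Type*} [LinearOrder ι] (a : ι → ℝ) (i : ι) : Prop :=
  (∀ k, a k ≤ a i) ∧ ∀ k, a k = a i → i ≤ k

namespace IsFirstArgmax

variable {ι : Type*} [LinearOrder ι] {a b : ι → ℝ} {i j : ι}

lemma abs_sub_le (ha : IsFirstArgmax a i) (hb : IsFirstArgmax b j) :
    |a i - a j| ≤ |(a i - a j) - (b i - b j)| := by
  have hai := ha.1 j
  have hbj := hb.1 i
  rw [abs_of_nonneg (by linarith), abs_of_nonneg (by linarith)]
  linarith

lemma eq_of_sub_eq (ha : IsFirstArgmax a i) (hb : IsFirstArgmax b j)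
    (h : a i - a j = b i - b j) : i = j := by
  have hai := ha.1 j
  have hbj := hb.1 i
  exact le_antisymm (ha.2 j (by linarith)) (hb.2 i (by linarith))

end IsFirstArgmax

section Projection

variable {E ι : Type*} [NormedAddCommGroup E] [InnerProductSpace ℝ E] [LinearOrder ι]
  (V : Submodule ℝ E) [V.HasOrthogonalProjection]

lemma inner_orthogonalProjectionOnto_orthogonal (w z : E) :
    ⟪(Vᗮ.orthogonalProjectionOnto w : E), z⟫ =
      ⟪w, z⟫ - ⟪(V.orthogonalProjectionOnto w : E), z⟫ := by
  simp [inner_sub_left]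

lemma disagreement_of_isFirstArgmax {w : ι → E} {t : ι → ℝ} {z : E} {i j : ι}
    (hi : IsFirstArgmax (fun k => ⟪w k, z⟫ + t k) i)
    (hj : IsFirstArgmax (fun k => ⟪(Vᗮ.orthogonalProjectionOnto (w k) : E), z⟫ + t k) j)
    (hij : i ≠ j) :
    w i ≠ w j ∧
      |⟪w i - w j, z⟫ + (t i - t j)| ≤ |⟪(V.orthogonalProjectionOnto (w i - w j) : E), z⟫| := by
  have hgap : ∀ k l, (⟪w k, z⟫ + t k - (⟪w l, z⟫ + t l)) -
      (⟪(Vᗮ.orthogonalProjectionOnto (w k) : E), z⟫ + t k -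
        (⟪(Vᗮ.orthogonalProjectionOnto (w l) : E), z⟫ + t l)) =
      ⟪(V.orthogonalProjectionOnto (w k - w l) : E), z⟫ := by
    intro k l
    rw [map_sub, Submodule.coe_sub, inner_sub_left, inner_orthogonalProjectionOnto_orthogonal,
      inner_orthogonalProjectionOnto_orthogonal]
    ring
  refine ⟨fun hw => hij (hi.eq_of_sub_eq hj ?_), ?_⟩
  · simp only [hw]
    ring
  · have hle := hi.abs_sub_le hj
    rw [hgap] at hle
    convert hle using 2
    rw [inner_sub_left]
    ring

end Projection

lemma measure_le_card_mul_of_subset_iUnion {α κ : Type*} [MeasurableSpace α] [Fintype κ]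
    (μ : Measure α) {s : Set α} {A : κ → Set α} {c : ℝ} (hs : s ⊆ ⋃ p, A p)
    (hA : ∀ p, μ (A p) ≤ ENNReal.ofReal c) : μ s ≤ ENNReal.ofReal (Fintype.card κ * c) := by
  calc μ s ≤ ∑ p, μ (A p) := (measure_mono hs).trans (measure_iUnion_fintype_le _ _)
    _ ≤ ∑ _p : κ, ENNReal.ofReal c := Finset.sum_le_sum fun p _ => hA p
    _ = ENNReal.ofReal (Fintype.card κ * c) := by
        rw [Finset.sum_const, Finset.card_univ, nsmul_eq_mul, ENNReal.ofReal_mul (by positivity),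
          ENNReal.ofReal_natCast]

lemma stdGaussianE_eq_stdGaussian (d : ℕ) :
    stdGaussianE d = stdGaussian (EuclideanSpace ℝ (Fin d)) :=
  map_pi_eq_stdGaussian

lemma gaussianPDFReal_le (m : ℝ) (v : NNReal) (x : ℝ) :
    gaussianPDFReal m v x ≤ (√(2 * π * v))⁻¹ := by
  rw [gaussianPDFReal]
  refine mul_le_of_le_one_right (by positivity) (exp_le_one_iff.2 ?_)
  exact div_nonpos_of_nonpos_of_nonneg (neg_nonpos.2 (sq_nonneg _)) (by positivity)

lemma gaussianReal_le_mul_volume (m : ℝ) {v : NNReal} (hv : v ≠ 0) (s : Set ℝ) :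
    gaussianReal m v s ≤ ENNReal.ofReal (√(2 * π * v))⁻¹ * volume s := by
  rw [gaussianReal_of_var_ne_zero m hv, withDensity_apply' _ s, ← setLIntegral_const]
  exact lintegral_mono fun x => ENNReal.ofReal_le_ofReal (gaussianPDFReal_le m v x)

section StdGaussian

variable {E : Type*} [NormedAddCommGroup E] [InnerProductSpace ℝ E] [FiniteDimensional ℝ E]
  [MeasurableSpace E] [BorelSpace E]

lemma stdGaussian_map_inner (u : E) :
    (stdGaussian E).map (fun z => ⟪u, z⟫) = gaussianReal 0 (‖u‖ ^ 2).toNNReal := by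
  have h := IsGaussian.map_eq_gaussianReal (μ := stdGaussian E) (innerSL ℝ u)
  rw [integral_strongDual_stdGaussian, variance_dual_stdGaussian, innerSL_apply_norm] at h
  exact h

lemma stdGaussian_abs_inner_add_le {u : E} (hu : u ≠ 0) (s : ℝ) {R : ℝ} (hR : 0 ≤ R) :
    stdGaussian E {z | |⟪u, z⟫ + s| ≤ R} ≤ ENNReal.ofReal (R / ‖u‖) := by
  have hslab : {z : E | |⟪u, z⟫ + s| ≤ R} = (fun z => ⟪u, z⟫) ⁻¹' Metric.closedBall (-s) R := by
    ext z; simp [Real.dist_eq]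
  have hvar : (‖u‖ ^ 2).toNNReal ≠ 0 := by simpa using hu
  rw [hslab, ← Measure.map_apply (by fun_prop) measurableSet_closedBall, stdGaussian_map_inner]
  refine (gaussianReal_le_mul_volume 0 hvar _).trans ?_
  rw [Real.volume_closedBall, ← ENNReal.ofReal_mul (by positivity)]
  refine ENNReal.ofReal_le_ofReal ?_
  have hpi : 2 ≤ √(2 * π) := le_sqrt_of_sq_le (by nlinarith [pi_gt_three])
  rw [Real.coe_toNNReal _ (by positivity), sqrt_mul (by positivity), sqrt_sq (norm_nonneg u)]
  calc (√(2 * π) * ‖u‖)⁻¹ * (2 * R) = 2 / √(2 * π) * (R / ‖u‖) := by field_simp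
    _ ≤ 1 * (R / ‖u‖) := by gcongr; exact (div_le_one (by positivity)).2 hpi
    _ = R / ‖u‖ := one_mul _

lemma stdGaussian_le_abs_inner (v : E) {R : ℝ} (hR : 0 < R) :
    stdGaussian E {z | R ≤ |⟪v, z⟫|} ≤ ENNReal.ofReal (‖v‖ ^ 2 / R ^ 2) := by
  have h := meas_ge_le_variance_div_sq (IsGaussian.memLp_dual (stdGaussian E) (innerSL ℝ v) 2
    (by simp)) hR
  rw [integral_strongDual_stdGaussian, variance_dual_stdGaussian, innerSL_apply_norm] at h
  simpa using h

lemma stdGaussian_abs_inner_add_le_abs_inner {u v : E} (hu : u ≠ 0) {δ : ℝ} (hδ : 0 < δ)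
    (hv : ‖v‖ ≤ δ ^ 2 * ‖u‖) (s : ℝ) :
    stdGaussian E {z | |⟪u, z⟫ + s| ≤ |⟪v, z⟫|} ≤ ENNReal.ofReal (δ + δ ^ 2) := by
  have hu' : 0 < ‖u‖ := norm_pos_iff.2 hu
  set R := δ * ‖u‖
  have hR : 0 < R := by positivity
  have hsplit : {z : E | |⟪u, z⟫ + s| ≤ |⟪v, z⟫|} ⊆
      {z | |⟪u, z⟫ + s| ≤ R} ∪ {z | R ≤ |⟪v, z⟫|} := fun z hz =>
    (le_or_gt R |⟪v, z⟫|).elim Or.inr fun h => Or.inl (hz.trans h.le)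
  have hRu : R / ‖u‖ = δ := mul_div_cancel_right₀ δ hu'.ne'
  have htail : ‖v‖ ^ 2 / R ^ 2 ≤ δ ^ 2 := by
    rw [div_le_iff₀ (by positivity)]
    calc ‖v‖ ^ 2 ≤ (δ ^ 2 * ‖u‖) ^ 2 := pow_le_pow_left₀ (norm_nonneg v) hv 2
      _ = δ ^ 2 * R ^ 2 := by ring
  calc stdGaussian E {z | |⟪u, z⟫ + s| ≤ |⟪v, z⟫|}
      ≤ stdGaussian E {z | |⟪u, z⟫ + s| ≤ R} + stdGaussian E {z | R ≤ |⟪v, z⟫|} :=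
        (measure_mono hsplit).trans (measure_union_le _ _)
    _ ≤ ENNReal.ofReal δ + ENNReal.ofReal (δ ^ 2) := by
        gcongr
        · exact hRu ▸ stdGaussian_abs_inner_add_le hu s hR.le
        · exact (stdGaussian_le_abs_inner v hR).trans (ENNReal.ofReal_le_ofReal htail)
    _ = ENNReal.ofReal (δ + δ ^ 2) := (ENNReal.ofReal_add hδ.le (by positivity)).symm

end StdGaussian

/-- Projection lemma for multiclass linear classifiers: there is an absolute constant `C` such
that, for any `K ≥ 2`, `ε ∈ (0,1)`, any nonzero subspace `V` with
`‖proj_V(w⁽ⁱ⁾ - w⁽ʲ⁾)‖ ≤ (ε²/K⁴)‖w⁽ⁱ⁾ - w⁽ʲ⁾‖` for all `i ≠ j`, the classifier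
`f(x) = argmax_i (w⁽ⁱ⁾·x + tᵢ)` and the projected classifier
`f^{⊥V}(x) = argmax_i (proj_{V^⊥}(w⁽ⁱ⁾)·x + tᵢ)` (ties broken by smallest index) agree except
on a set of Gaussian measure at most `Cε`. -/
theorem projected_classifier_close :
    ∃ C > (0 : ℝ), ∀ (d K : ℕ), 2 ≤ K → ∀ ε : ℝ, 0 < ε → ε < 1 →
      ∀ (w : Fin K → EuclideanSpace ℝ (Fin d)) (t : Fin K → ℝ)
        (V : Submodule ℝ (EuclideanSpace ℝ (Fin d))), V ≠ ⊥ →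
      (∀ i j, i ≠ j →
        ‖(Submodule.orthogonalProjectionOnto V (w i - w j) : EuclideanSpace ℝ (Fin d))‖ ≤
          ε ^ 2 / (K : ℝ) ^ 4 * ‖w i - w j‖) →
      ∀ f g : EuclideanSpace ℝ (Fin d) → Fin K,
      (∀ z, (∀ k, ⟪w k, z⟫ + t k ≤ ⟪w (f z), z⟫ + t (f z)) ∧
        (∀ k, ⟪w k, z⟫ + t k = ⟪w (f z), z⟫ + t (f z) → f z ≤ k)) →
      (∀ z, (∀ k,
          ⟪(Submodule.orthogonalProjectionOnto Vᗮ (w k) : EuclideanSpace ℝ (Fin d)), z⟫ + t k ≤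
            ⟪(Submodule.orthogonalProjectionOnto Vᗮ (w (g z)) : EuclideanSpace ℝ (Fin d)), z⟫ + t (g z)) ∧
        (∀ k,
          ⟪(Submodule.orthogonalProjectionOnto Vᗮ (w k) : EuclideanSpace ℝ (Fin d)), z⟫ + t k =
            ⟪(Submodule.orthogonalProjectionOnto Vᗮ (w (g z)) : EuclideanSpace ℝ (Fin d)), z⟫ + t (g z) →
          g z ≤ k)) →
      stdGaussianE d {z | f z ≠ g z} ≤ ENNReal.ofReal (C * ε) := by
  refine ⟨2, two_pos, fun d K hK ε hε hε1 w t V _ hproj f g hf hg => ?_⟩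
  have hK1 : (1 : ℝ) ≤ K := by exact_mod_cast one_le_two.trans hK
  set δ := ε / (K : ℝ) ^ 2
  have hδ : 0 < δ := by positivity
  have hδ1 : δ ≤ 1 := div_le_one_of_le₀ (by nlinarith) (by positivity)
  let bad : Fin K × Fin K → Set (EuclideanSpace ℝ (Fin d)) := fun p =>
    {z | w p.1 ≠ w p.2 ∧ |⟪w p.1 - w p.2, z⟫ + (t p.1 - t p.2)| ≤
      |⟪(V.orthogonalProjectionOnto (w p.1 - w p.2) : EuclideanSpace ℝ (Fin d)), z⟫|}
  have hcover : {z | f z ≠ g z} ⊆ ⋃ p, bad p := fun z hz =>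
    Set.mem_iUnion.2 ⟨(f z, g z), disagreement_of_isFirstArgmax V (hf z) (hg z) hz⟩
  have hbad : ∀ p, stdGaussianE d (bad p) ≤ ENNReal.ofReal (δ + δ ^ 2) := by
    rintro ⟨i, j⟩
    by_cases hw : w i = w j
    · simp [bad, hw]
    · rw [stdGaussianE_eq_stdGaussian]
      refine (measure_mono fun z hz => hz.2).trans
        (stdGaussian_abs_inner_add_le_abs_inner (sub_ne_zero.2 hw) hδ ?_ _)
      convert hproj i j (fun h => hw (congrArg w h)) using 2
      ring
  refine (measure_le_card_mul_of_subset_iUnion _ hcover hbad).trans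
    (ENNReal.ofReal_le_ofReal ?_)
  have hKδ : (K : ℝ) ^ 2 * δ = ε := mul_div_cancel₀ ε (by positivity)
  simp only [Fintype.card_prod, Fintype.card_fin, Nat.cast_mul]
  nlinarith
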